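/- Every vertex of the scaled tetrahedron (√6/(1+√2))·T2, when projected to the xy-plane, lies strictly inside the projection of T1 to the xy-plane, for any scale factor strictly less than √6/(1+√2); hence the regular tetrahedron has Nieuwland constant at least √6/(1+√2). -/
import Mathlib

open Pointwise

noncomputable def T1verts : Set (Fin 3 → ℝ) :=
  {![0, 1, -Real.sqrt (1/8)],
   ![Real.sqrt (3/4), -1/2, -Real.sqrt (1/8)],
   ![-Real.sqrt (3/4), -1/2, -Real.sqrt (1/8)],
   ![0, 0, Real.sqrt (9/8)]}

noncomputable def T2verts : Set (Fin 3 → ℝ) :=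
  {![(2 - Real.sqrt 2)/4, (5*Real.sqrt 6 - 2*Real.sqrt 3)/12, (2 + Real.sqrt 2)/4],
   ![-(2 - Real.sqrt 2)/4, (5*Real.sqrt 6 - 2*Real.sqrt 3)/12, -(2 + Real.sqrt 2)/4],
   ![(2 + Real.sqrt 2)/4, -(2*Real.sqrt 3 + Real.sqrt 6)/12, -(2 - Real.sqrt 2)/4],
   ![-(2 + Real.sqrt 2)/4, -(2*Real.sqrt 3 + Real.sqrt 6)/12, (2 - Real.sqrt 2)/4]}

noncomputable def T1' : Set (Fin 3 → ℝ) := convexHull ℝ T1verts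
noncomputable def T2' : Set (Fin 3 → ℝ) := convexHull ℝ T2verts

def projXY (p : Fin 3 → ℝ) : Fin 2 → ℝ := ![p 0, p 1]

/-- auxiliary stuff -/

lemma sqrt34 : Real.sqrt (3/4) = Real.sqrt 3 / 2 := by
  rw [show (3/4 : ℝ) = (Real.sqrt 3 / 2)^2 by
    rw [div_pow, Real.sq_sqrt] <;> norm_num]
  exact Real.sqrt_sq (by positivity)

lemma sqrt6 : Real.sqrt 6 = Real.sqrt 2 * Real.sqrt 3 := by
  rw [← Real.sqrt_mul (by norm_num)]; norm_num

lemma mem_hull3 {F : Type*} [AddCommGroup F] [Module ℝ F] (x y z : F) (a b c : ℝ)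
    (ha : 0 ≤ a) (hb : 0 ≤ b) (hc : 0 ≤ c) (h : a + b + c = 1) :
    a • x + b • y + c • z ∈ convexHull ℝ ({x, y, z} : Set F) := by
  have hx : x ∈ convexHull ℝ ({x, y, z} : Set F) := subset_convexHull _ _ (by simp)
  have hy : y ∈ convexHull ℝ ({x, y, z} : Set F) := subset_convexHull _ _ (by simp)
  have hz : z ∈ convexHull ℝ ({x, y, z} : Set F) := subset_convexHull _ _ (by simp)
  have hconv := convex_convexHull ℝ ({x, y, z} : Set F)
  rcases eq_or_lt_of_le (add_nonneg hb hc) with h0 | h0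
  · have hb0 : b = 0 := by linarith
    have hc0 : c = 0 := by linarith
    have ha1 : a = 1 := by linarith
    simpa [hb0, hc0, ha1] using hx
  · have hw := hconv hy hz (div_nonneg hb h0.le) (div_nonneg hc h0.le) (by field_simp)
    have := hconv hx hw ha (add_nonneg hb hc) (by linarith)
    have e1 : (b+c) * (b/(b+c)) = b := by field_simp
    have e2 : (b+c) * (c/(b+c)) = c := by field_simp
    rwa [smul_add, smul_smul, smul_smul, e1, e2, ← add_assoc] at this

noncomputable def triV : Set (Fin 2 → ℝ) :=
  {![0, 1], ![Real.sqrt (3/4), -1/2], ![-Real.sqrt (3/4), -1/2]}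

lemma tri_mem (x y : ℝ) (h1 : -2*y ≤ 1) (h2 : Real.sqrt 3 * x + y ≤ 1)
    (h3 : -(Real.sqrt 3) * x + y ≤ 1) : ![x, y] ∈ convexHull ℝ triV := by
  have hs3 : Real.sqrt 3 * Real.sqrt 3 = 3 := Real.mul_self_sqrt (by norm_num)
  have hs3n : 0 ≤ Real.sqrt 3 := Real.sqrt_nonneg 3
  have hs3p : (0:ℝ) < Real.sqrt 3 := by nlinarith
  set a : ℝ := (2*y+1)/3 with ha_def
  set b : ℝ := (1-y)/3 + Real.sqrt 3 * x / 3 with hb_def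
  set c : ℝ := (1-y)/3 - Real.sqrt 3 * x / 3 with hc_def
  have ha : 0 ≤ a := by rw [ha_def]; linarith
  have hb : 0 ≤ b := by rw [hb_def]; linarith
  have hc : 0 ≤ c := by rw [hc_def]; linarith
  have hsum : a + b + c = 1 := by rw [ha_def, hb_def, hc_def]; ring
  have key : ![x, y] = a • ![(0:ℝ), 1] + b • ![Real.sqrt (3/4), -1/2]
      + c • ![-Real.sqrt (3/4), -1/2] := by
    rw [Matrix.smul_vec2, Matrix.smul_vec2, Matrix.smul_vec2, Matrix.vec2_add, Matrix.vec2_add]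
    refine Matrix.vec2_eq ?_ ?_ <;> simp only [smul_eq_mul, sqrt34, ha_def, hb_def, hc_def]
    · field_simp; nlinarith [hs3]
    · ring
  rw [key]
  exact mem_hull3 _ _ _ a b c ha hb hc hsum

lemma proj_smul (c a b d : ℝ) : projXY (c • ![a, b, d]) = ![c*a, c*b] := by
  rw [Matrix.smul_vec3]
  simp [projXY]

noncomputable def Oset : Set (Fin 2 → ℝ) :=
  {q | -2*q 1 < 1} ∩ {q | Real.sqrt 3*q 0 + q 1 < 1} ∩ {q | -Real.sqrt 3*q 0 + q 1 < 1}

lemma Oopen : IsOpen Oset :=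
  ((isOpen_lt (by continuity) continuous_const).inter
    (isOpen_lt (by continuity) continuous_const)).inter
    (isOpen_lt (by continuity) continuous_const)

lemma O_mem (x y : ℝ) (h1 : -2*y < 1) (h2 : Real.sqrt 3 * x + y < 1)
    (h3 : -(Real.sqrt 3) * x + y < 1) : ![x, y] ∈ Oset := by
  refine ⟨⟨?_, ?_⟩, ?_⟩ <;>
    simp only [Set.mem_setOf_eq, Matrix.cons_val_zero, Matrix.cons_val_one, Matrix.head_cons] <;>
    linarith

lemma O_sub : Oset ⊆ convexHull ℝ triV := by
  rintro q ⟨⟨h1, h2⟩, h3⟩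
  have hq : q = ![q 0, q 1] := by funext i; fin_cases i <;> rfl
  rw [hq]
  exact tri_mem _ _ (le_of_lt h1) (le_of_lt h2) (le_of_lt h3)

lemma key_le {c : ℝ} (hcb : c*(1+Real.sqrt 2) ≤ Real.sqrt 2*Real.sqrt 3) :
    c * (Real.sqrt 3 * (2 + Real.sqrt 2)) ≤ 6 := by
  have hs2 : Real.sqrt 2*Real.sqrt 2 = 2 := Real.mul_self_sqrt (by norm_num)
  have hs3 : Real.sqrt 3*Real.sqrt 3 = 3 := Real.mul_self_sqrt (by norm_num)
  have hpos : (0:ℝ) < 1 + Real.sqrt 2 := by positivity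
  have h := mul_le_mul_of_nonneg_right hcb
    (show (0:ℝ) ≤ Real.sqrt 3*(2+Real.sqrt 2) by positivity)
  have e : Real.sqrt 2*Real.sqrt 3*(Real.sqrt 3*(2+Real.sqrt 2)) = 6*(1+Real.sqrt 2) := by
    linear_combination (Real.sqrt 2*(2+Real.sqrt 2))*hs3 + 3*hs2
  rw [e] at h
  have h' : c*(Real.sqrt 3*(2+Real.sqrt 2))*(1+Real.sqrt 2) ≤ 6*(1+Real.sqrt 2) := by
    nlinarith [h]
  exact le_of_mul_le_mul_right h' hpos

lemma key_lt {c : ℝ} (hcb : c*(1+Real.sqrt 2) < Real.sqrt 2*Real.sqrt 3) :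
    c * (Real.sqrt 3 * (2 + Real.sqrt 2)) < 6 := by
  have hs2 : Real.sqrt 2*Real.sqrt 2 = 2 := Real.mul_self_sqrt (by norm_num)
  have hs3 : Real.sqrt 3*Real.sqrt 3 = 3 := Real.mul_self_sqrt (by norm_num)
  have hpos : (0:ℝ) < 1 + Real.sqrt 2 := by positivity
  have h := mul_lt_mul_of_pos_right hcb
    (show (0:ℝ) < Real.sqrt 3*(2+Real.sqrt 2) by positivity)
  have e : Real.sqrt 2*Real.sqrt 3*(Real.sqrt 3*(2+Real.sqrt 2)) = 6*(1+Real.sqrt 2) := by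
    linear_combination (Real.sqrt 2*(2+Real.sqrt 2))*hs3 + 3*hs2
  rw [e] at h
  have h' : c*(Real.sqrt 3*(2+Real.sqrt 2))*(1+Real.sqrt 2) < 6*(1+Real.sqrt 2) := by
    nlinarith [h]
  exact lt_of_mul_lt_mul_right h' hpos.le

lemma facts :
    (1.4 ≤ Real.sqrt 2 ∧ Real.sqrt 2 < 1.5) ∧ (1.7 ≤ Real.sqrt 3 ∧ Real.sqrt 3 < 1.8) := by
  have hs2 : Real.sqrt 2*Real.sqrt 2 = 2 := Real.mul_self_sqrt (by norm_num)
  have hs3 : Real.sqrt 3*Real.sqrt 3 = 3 := Real.mul_self_sqrt (by norm_num)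
  have h2n := Real.sqrt_nonneg 2
  have h3n := Real.sqrt_nonneg 3
  refine ⟨⟨by nlinarith, by nlinarith⟩, ⟨by nlinarith, by nlinarith⟩⟩

lemma c_ub {c : ℝ} (hc : 0 ≤ c) (hcb : c*(1+Real.sqrt 2) ≤ Real.sqrt 2*Real.sqrt 3) :
    c ≤ 9/8 := by
  have hs2 : Real.sqrt 2*Real.sqrt 2 = 2 := Real.mul_self_sqrt (by norm_num)
  have hs3 : Real.sqrt 3*Real.sqrt 3 = 3 := Real.mul_self_sqrt (by norm_num)
  obtain ⟨⟨h2l, h2u⟩, ⟨h3l, h3u⟩⟩ := facts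
  have hst : Real.sqrt 2 * Real.sqrt 3 < 5/2 := by nlinarith
  nlinarith [mul_le_mul_of_nonneg_left h2l hc]

lemma pts_le {c : ℝ} (hc : 0 ≤ c) (hcb : c*(1+Real.sqrt 2) ≤ Real.sqrt 2*Real.sqrt 3) :
    ∀ p ∈ T2verts, projXY (c • p) ∈ convexHull ℝ triV := by
  have hs2 : Real.sqrt 2*Real.sqrt 2 = 2 := Real.mul_self_sqrt (by norm_num)
  have hs3 : Real.sqrt 3*Real.sqrt 3 = 3 := Real.mul_self_sqrt (by norm_num)
  obtain ⟨⟨h2l, h2u⟩, ⟨h3l, h3u⟩⟩ := facts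
  have h2n := Real.sqrt_nonneg 2
  have h3n := Real.sqrt_nonneg 3
  have key := key_le hcb
  have hcu := c_ub hc hcb
  have hm2 : 0 ≤ c * Real.sqrt 3 := mul_nonneg hc h3n
  have hm1 : 0 ≤ c * Real.sqrt 3 * Real.sqrt 2 := mul_nonneg hm2 h2n
  have hst : c * Real.sqrt 3 * (Real.sqrt 2 - 1) ≤ 0.9 := by
    have h1 : Real.sqrt 3 * (Real.sqrt 2 - 1) ≤ 0.8 := by
      nlinarith [sq_nonneg (Real.sqrt 2*Real.sqrt 3 - 2.45)]
    have h2 : 0 ≤ Real.sqrt 3 * (Real.sqrt 2 - 1) := by nlinarith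
    nlinarith
  intro p hp
  simp only [T2verts, Set.mem_insert_iff, Set.mem_singleton_iff] at hp
  rcases hp with rfl | rfl | rfl | rfl <;> rw [proj_smul] <;> rw [sqrt6] <;>
    refine tri_mem _ _ ?_ ?_ ?_
  · nlinarith [mul_le_mul_of_nonneg_left h2l hm2]
  · linarith [key]
  · nlinarith [hst]
  · nlinarith [mul_le_mul_of_nonneg_left h2l hm2]
  · nlinarith [hst]
  · linarith [key]
  · linarith [key]
  · linarith [key]
  · nlinarith [hm1, hm2]
  · linarith [key]
  · nlinarith [hm1, hm2]
  · linarith [key]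

lemma pts_lt {c : ℝ} (hc : 0 ≤ c) (hcb : c*(1+Real.sqrt 2) < Real.sqrt 2*Real.sqrt 3) :
    ∀ p ∈ T2verts, projXY (c • p) ∈ Oset := by
  have hs2 : Real.sqrt 2*Real.sqrt 2 = 2 := Real.mul_self_sqrt (by norm_num)
  have hs3 : Real.sqrt 3*Real.sqrt 3 = 3 := Real.mul_self_sqrt (by norm_num)
  obtain ⟨⟨h2l, h2u⟩, ⟨h3l, h3u⟩⟩ := facts
  have h2n := Real.sqrt_nonneg 2
  have h3n := Real.sqrt_nonneg 3
  have key := key_lt hcb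
  have hcu := c_ub hc hcb.le
  have hm2 : 0 ≤ c * Real.sqrt 3 := mul_nonneg hc h3n
  have hm1 : 0 ≤ c * Real.sqrt 3 * Real.sqrt 2 := mul_nonneg hm2 h2n
  have hst : c * Real.sqrt 3 * (Real.sqrt 2 - 1) ≤ 0.9 := by
    have h1 : Real.sqrt 3 * (Real.sqrt 2 - 1) ≤ 0.8 := by
      nlinarith [sq_nonneg (Real.sqrt 2*Real.sqrt 3 - 2.45)]
    have h2 : 0 ≤ Real.sqrt 3 * (Real.sqrt 2 - 1) := by nlinarith
    nlinarith
  intro p hp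
  simp only [T2verts, Set.mem_insert_iff, Set.mem_singleton_iff] at hp
  rcases hp with rfl | rfl | rfl | rfl <;> rw [proj_smul] <;> rw [sqrt6] <;>
    refine O_mem _ _ ?_ ?_ ?_
  · nlinarith [mul_le_mul_of_nonneg_left h2l hm2]
  · linarith [key]
  · nlinarith [hst]
  · nlinarith [mul_le_mul_of_nonneg_left h2l hm2]
  · nlinarith [hst]
  · linarith [key]
  · linarith [key]
  · linarith [key]
  · nlinarith [hm1, hm2]
  · linarith [key]
  · nlinarith [hm1, hm2]
  · linarith [key]

lemma projXY_linear : IsLinearMap ℝ projXY :=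
  ⟨fun x y => by funext i; fin_cases i <;> rfl,
   fun c x => by funext i; fin_cases i <;> rfl⟩

lemma triV_sub : triV ⊆ projXY '' T1verts := by
  rintro v (rfl | rfl | rfl)
  · exact ⟨![0, 1, -Real.sqrt (1/8)], Or.inl rfl, by funext i; fin_cases i <;> rfl⟩
  · exact ⟨![Real.sqrt (3/4), -1/2, -Real.sqrt (1/8)], Or.inr (Or.inl rfl),
      by funext i; fin_cases i <;> rfl⟩
  · exact ⟨![-Real.sqrt (3/4), -1/2, -Real.sqrt (1/8)], Or.inr (Or.inr (Or.inl rfl)),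
      by funext i; fin_cases i <;> rfl⟩

lemma hull_sub : convexHull ℝ triV ⊆ projXY '' T1' := by
  rw [T1', projXY_linear.image_convexHull]
  exact convexHull_mono triV_sub

theorem tetrahedron_nieuwland_ge :
    (∀ c : ℝ, 0 ≤ c → c < Real.sqrt 6 / (1 + Real.sqrt 2) →
      ∀ p ∈ T2verts, projXY (c • p) ∈ interior (projXY '' T1')) ∧
    projXY '' ((Real.sqrt 6 / (1 + Real.sqrt 2)) • T2') ⊆ projXY '' T1' := by
  have hpos : (0:ℝ) < 1 + Real.sqrt 2 := by positivity
  constructor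
  · intro c hc hclt p hp
    have hcb : c*(1+Real.sqrt 2) < Real.sqrt 2*Real.sqrt 3 := by
      have := (lt_div_iff₀ hpos).mp hclt
      rwa [sqrt6] at this
    exact mem_interior.mpr ⟨Oset, fun q hq => hull_sub (O_sub hq), Oopen, pts_lt hc hcb p hp⟩
  · intro x hx
    set μ := Real.sqrt 6 / (1 + Real.sqrt 2) with hμ
    have hμ0 : 0 ≤ μ := by positivity
    have hμb : μ*(1+Real.sqrt 2) ≤ Real.sqrt 2*Real.sqrt 3 := by
      rw [hμ, div_mul_cancel₀ _ (ne_of_gt hpos), sqrt6]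
    rw [show μ • T2' = convexHull ℝ (μ • T2verts) from by
        rw [T2', convexHull_smul], projXY_linear.image_convexHull] at hx
    have hconv : Convex ℝ (projXY '' T1') := by
      rw [T1', projXY_linear.image_convexHull]
      exact convex_convexHull ℝ _
    refine convexHull_min ?_ hconv hx
    rintro _ ⟨q, hq, rfl⟩
    rcases Set.mem_smul_set.mp hq with ⟨p, hp, rfl⟩
    exact hull_sub (pts_le hμ0 hμb p hp)
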